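/- One-step clustering contraction: Let p' be one step of the Gibbs sampler from p ∈ [0,1]^d (choose i uniformly in [d], replace p_i by (D^{-1}Cp)_i + ε_i where ε_i is a truncated normal with variance 1/(2A²c_i) conditioned to keep the coordinate in [0,1]). Then E[⟨p', Δp'⟩] ≤ (1 - λ/d) E[⟨p, Δp⟩] + 5/(2A²). -/

import Mathlib

/-!
Resampling coordinate `i` replaces `p i` by `m + ε` with `m = (D⁻¹Cp)_i`, and since `C` is
symmetric with zero diagonal the energy `⟨p, Δp⟩` changes by exactly `c_i (ε² - (Δp)_i²)`.
Because `m ∈ [0,1]`, the truncation window `[-m, 1-m]` contains `0`, and then the truncated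
normal has second moment at most `σ²`: integrating `(x² - σ²) e^{-x²/2σ²} = (-σ² x e^{-x²/2σ²})'`
over the window leaves only nonpositive boundary terms. Averaging over `i` gives
`E⟨p', Δp'⟩ ≤ ⟨p, Δp⟩ - ⟨Δp, Δp⟩/d + 1/(2A²)`, and the spectral gap bounds `⟨Δp, Δp⟩` below.
-/

open MeasureTheory
open scoped ENNReal

/-- The law of the truncated normal `ε(σ², p)`: a centered normal with variance `σ²`
conditioned to lie in `[-p, 1-p]`. -/
noncomputable def truncGaussLaw (σ p : ℝ) : Measure ℝ :=
  (volume.restrict (Set.Icc (-p) (1 - p))).withDensity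
    (fun x => ENNReal.ofReal (Real.exp (-x ^ 2 / (2 * σ ^ 2)) /
      ∫ y in Set.Icc (-p) (1 - p), Real.exp (-y ^ 2 / (2 * σ ^ 2))))

/-- One step of the Gibbs sampler for `π_{A,C}`: choose a coordinate `i`
uniformly at random and replace `p i` by `(D⁻¹Cp)_i + ε_i`, where `ε_i` is a
centered normal with variance `1/(2A²c_i)` conditioned to keep the coordinate
in `[0,1]`. -/
noncomputable def gibbsStep (d : ℕ) (C : Fin d → Fin d → ℝ) (c : Fin d → ℝ)
    (A : ℝ) (p : Fin d → ℝ) : Measure (Fin d → ℝ) :=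
  (d : ℝ≥0∞)⁻¹ • ∑ i : Fin d,
    Measure.map
      (fun x => Function.update p i ((∑ j, C i j * p j) / c i + x))
      (truncGaussLaw (Real.sqrt (1 / (2 * A ^ 2 * c i)))
        ((∑ j, C i j * p j) / c i))

open Finset Real Set

section TruncatedGaussian

variable {σ m : ℝ}

theorem integral_sq_sub_mul_gaussian (hσ : σ ≠ 0) (a b : ℝ) :
    ∫ x in a..b, (x ^ 2 - σ ^ 2) * exp (-x ^ 2 / (2 * σ ^ 2))
      = σ ^ 2 * (a * exp (-a ^ 2 / (2 * σ ^ 2)) - b * exp (-b ^ 2 / (2 * σ ^ 2))) := by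
  have hderiv (x : ℝ) : HasDerivAt (fun y => -σ ^ 2 * y * exp (-y ^ 2 / (2 * σ ^ 2)))
      ((x ^ 2 - σ ^ 2) * exp (-x ^ 2 / (2 * σ ^ 2))) x := by
    have hexp := (((hasDerivAt_pow 2 x).neg).div_const (2 * σ ^ 2)).exp
    have hprod : HasDerivAt (fun y => -σ ^ 2 * y * exp (-y ^ 2 / (2 * σ ^ 2))) _ x :=
      ((hasDerivAt_id x).const_mul (-σ ^ 2)).mul hexp
    refine hprod.congr_deriv ?_
    simp only [id, Pi.neg_apply]
    field_simp
    ring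
  rw [intervalIntegral.integral_eq_sub_of_hasDerivAt (fun x _ => hderiv x)
    (by apply Continuous.intervalIntegrable; fun_prop)]
  ring

theorem setIntegral_sq_mul_gaussian_le (hσ : σ ≠ 0) {a b : ℝ} (ha : a ≤ 0) (hb : 0 ≤ b) :
    ∫ x in Icc a b, x ^ 2 * exp (-x ^ 2 / (2 * σ ^ 2))
      ≤ σ ^ 2 * ∫ x in Icc a b, exp (-x ^ 2 / (2 * σ ^ 2)) := by
  have hab : a ≤ b := ha.trans hb
  have hboundary : σ ^ 2 * (a * exp (-a ^ 2 / (2 * σ ^ 2)) - b * exp (-b ^ 2 / (2 * σ ^ 2))) ≤ 0 :=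
    mul_nonpos_of_nonneg_of_nonpos (sq_nonneg σ) (by
      nlinarith [exp_pos (-a ^ 2 / (2 * σ ^ 2)), exp_pos (-b ^ 2 / (2 * σ ^ 2))])
  rw [← integral_sq_sub_mul_gaussian hσ, intervalIntegral.integral_of_le hab,
    ← integral_Icc_eq_integral_Ioc] at hboundary
  rw [← integral_const_mul, ← sub_nonpos, ← integral_sub]
  · simpa only [sub_mul] using hboundary
  all_goals exact Continuous.integrableOn_Icc (by fun_prop)

theorem truncGaussLaw_normalizer_pos (σ m : ℝ) :
    0 < ∫ y in Icc (-m) (1 - m), exp (-y ^ 2 / (2 * σ ^ 2)) := by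
  rw [integral_Icc_eq_integral_Ioc, ← intervalIntegral.integral_of_le (by linarith)]
  exact intervalIntegral.intervalIntegral_pos_of_pos_on
    (Continuous.intervalIntegrable (by fun_prop) _ _) (fun x _ => exp_pos _) (by linarith)

instance isProbabilityMeasure_truncGaussLaw (σ m : ℝ) :
    IsProbabilityMeasure (truncGaussLaw σ m) := by
  constructor
  rw [truncGaussLaw, withDensity_apply _ MeasurableSet.univ, Measure.restrict_univ,
    ← ofReal_integral_eq_lintegral_ofReal, integral_div,
    div_self (truncGaussLaw_normalizer_pos σ m).ne', ENNReal.ofReal_one]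
  · exact Continuous.integrableOn_Icc (by fun_prop)
  · exact Filter.Eventually.of_forall fun x =>
      div_nonneg (exp_pos _).le (truncGaussLaw_normalizer_pos σ m).le

theorem ae_mem_Icc_truncGaussLaw (σ m : ℝ) : ∀ᵐ x ∂truncGaussLaw σ m, x ∈ Icc (-m) (1 - m) :=
  withDensity_absolutelyContinuous _ _ (ae_restrict_mem measurableSet_Icc)

theorem Continuous.integrable_truncGaussLaw {G : ℝ → ℝ} (hG : Continuous G) :
    Integrable G (truncGaussLaw σ m) := by
  rw [← Measure.restrict_eq_self_of_ae_mem (ae_mem_Icc_truncGaussLaw σ m)]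
  exact hG.integrableOn_Icc

theorem integral_truncGaussLaw (G : ℝ → ℝ) :
    ∫ x, G x ∂truncGaussLaw σ m
      = (∫ x in Icc (-m) (1 - m), G x * exp (-x ^ 2 / (2 * σ ^ 2)))
        / ∫ y in Icc (-m) (1 - m), exp (-y ^ 2 / (2 * σ ^ 2)) := by
  have hZ := truncGaussLaw_normalizer_pos σ m
  refine (integral_withDensity_eq_integral_smul
    (f := fun x => (exp (-x ^ 2 / (2 * σ ^ 2)) /
      ∫ y in Icc (-m) (1 - m), exp (-y ^ 2 / (2 * σ ^ 2))).toNNReal)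
    (by fun_prop) G).trans ?_
  rw [← integral_div]
  refine integral_congr_ae (Filter.Eventually.of_forall fun x => ?_)
  simp only [NNReal.smul_def, smul_eq_mul, Real.coe_toNNReal _ (div_nonneg (exp_pos _).le hZ.le)]
  ring

theorem integral_sq_truncGaussLaw_le (hσ : σ ≠ 0) (hm₀ : 0 ≤ m) (hm₁ : m ≤ 1) :
    ∫ x, x ^ 2 ∂truncGaussLaw σ m ≤ σ ^ 2 := by
  rw [integral_truncGaussLaw, div_le_iff₀ (truncGaussLaw_normalizer_pos σ m)]
  exact setIntegral_sq_mul_gaussian_le hσ (by linarith) (by linarith)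

end TruncatedGaussian

section Network

variable {ι : Type*} [Fintype ι] (C : ι → ι → ℝ) (c : ι → ℝ)

-- `neighbourMean C c q i = (D⁻¹Cq)_i`, and `dirichletEnergy C c q = ⟨q, Δq⟩` for the
-- `c`-weighted inner product.
noncomputable def neighbourMean (q : ι → ℝ) (i : ι) : ℝ := (∑ j, C i j * q j) / c i

noncomputable def dirichletEnergy (q : ι → ℝ) : ℝ :=
  ∑ i, c i * q i * (q i - neighbourMean C c q i)

variable {C c}

theorem dirichletEnergy_eq (hc : ∀ i, c i ≠ 0) (q : ι → ℝ) :
    dirichletEnergy C c q = ∑ k, c k * q k ^ 2 - ∑ k, ∑ j, C k j * q k * q j := by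
  simp only [dirichletEnergy, neighbourMean, ← sum_sub_distrib]
  refine sum_congr rfl fun k _ => ?_
  have hrow : ∑ j, C k j * q k * q j = q k * ∑ j, C k j * q j := by
    rw [mul_sum]; exact sum_congr rfl fun j _ => by ring
  rw [hrow]
  field_simp [hc k]

theorem dirichletEnergy_update [DecidableEq ι] (hsym : ∀ i j, C i j = C j i)
    (hdiag : ∀ i, C i i = 0) (hc : ∀ i, c i ≠ 0) (q : ι → ℝ) (i : ι) (t : ℝ) :
    dirichletEnergy C c (Function.update q i t)
      = dirichletEnergy C c q - c i * (q i - neighbourMean C c q i) ^ 2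
        + c i * (t - neighbourMean C c q i) ^ 2 := by
  have hq : Function.update q i t = q + Pi.single i (t - q i) := by
    ext k; rcases eq_or_ne k i with rfl | hk <;> simp [*]
  rw [hq, dirichletEnergy_eq hc, dirichletEnergy_eq hc]
  simp only [Pi.add_apply, Pi.single_apply, add_sq, mul_ite, mul_zero, ite_pow, ne_eq,
    OfNat.ofNat_ne_zero, not_false_eq_true, zero_pow, mul_add, sum_add_distrib, sum_ite_eq',
    Finset.mem_univ, ↓reduceIte, add_mul, ite_mul, zero_mul, sum_ite_irrel, sum_const_zero]
  have hrow : ∑ k, C i k * (t - q i) * q k = (t - q i) * ∑ k, C i k * q k := by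
    rw [mul_sum]; exact sum_congr rfl fun k _ => by ring
  have hcol : ∑ k, C k i * q k * (t - q i) = (t - q i) * ∑ k, C i k * q k := by
    rw [mul_sum]; exact sum_congr rfl fun k _ => by rw [hsym]; ring
  rw [hrow, hcol, hdiag, neighbourMean]
  field_simp [hc i]
  ring

theorem neighbourMean_mem_Icc (hnonneg : ∀ i j, 0 ≤ C i j) (hc : ∀ i, c i = ∑ j, C i j)
    {q : ι → ℝ} (hq : ∀ j, q j ∈ Icc (0 : ℝ) 1) {i : ι} (hci : 0 < c i) :
    neighbourMean C c q i ∈ Icc (0 : ℝ) 1 := by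
  refine ⟨div_nonneg (sum_nonneg fun j _ => mul_nonneg (hnonneg i j) (hq j).1) hci.le, ?_⟩
  rw [neighbourMean, div_le_one hci, hc i]
  exact sum_le_sum fun j _ => mul_le_of_le_one_right (hnonneg i j) (hq j).2

theorem continuous_dirichletEnergy : Continuous (dirichletEnergy C c) := by
  unfold dirichletEnergy neighbourMean
  fun_prop

theorem integral_dirichletEnergy_update [DecidableEq ι] (hsym : ∀ i j, C i j = C j i)
    (hdiag : ∀ i, C i i = 0) (hc : ∀ i, c i ≠ 0) (q : ι → ℝ) (i : ι) {μ : Measure ℝ}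
    [IsProbabilityMeasure μ] (hμ : Integrable (fun x => x ^ 2) μ) :
    ∫ x, dirichletEnergy C c (Function.update q i (neighbourMean C c q i + x)) ∂μ
      = dirichletEnergy C c q - c i * (q i - neighbourMean C c q i) ^ 2
        + c i * ∫ x, x ^ 2 ∂μ := by
  simp_rw [dirichletEnergy_update hsym hdiag hc, add_sub_cancel_left]
  rw [integral_add (integrable_const _) (hμ.const_mul _), integral_const, integral_const_mul]
  simp

theorem integral_dirichletEnergy_update_truncGaussLaw_le [DecidableEq ι]
    (hsym : ∀ i j, C i j = C j i) (hnonneg : ∀ i j, 0 ≤ C i j) (hdiag : ∀ i, C i i = 0)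
    (hc : ∀ i, c i = ∑ j, C i j) (hcpos : ∀ i, 0 < c i) {A : ℝ} (hA : A ≠ 0)
    {p : ι → ℝ} (hp : ∀ i, p i ∈ Icc (0 : ℝ) 1) (i : ι) :
    ∫ x, dirichletEnergy C c (Function.update p i (neighbourMean C c p i + x))
        ∂truncGaussLaw (√(1 / (2 * A ^ 2 * c i))) (neighbourMean C c p i)
      ≤ dirichletEnergy C c p - c i * (p i - neighbourMean C c p i) ^ 2 + 1 / (2 * A ^ 2) := by
  have hci := hcpos i
  have hm := neighbourMean_mem_Icc hnonneg hc hp hci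
  have hσ : √(1 / (2 * A ^ 2 * c i)) ^ 2 = 1 / (2 * A ^ 2 * c i) := sq_sqrt (by positivity)
  have hmoment :=
    integral_sq_truncGaussLaw_le (σ := √(1 / (2 * A ^ 2 * c i))) (by positivity) hm.1 hm.2
  rw [hσ] at hmoment
  rw [integral_dirichletEnergy_update hsym hdiag (fun i => (hcpos i).ne') p i
    (continuous_pow 2).integrable_truncGaussLaw]
  calc _ ≤ dirichletEnergy C c p - c i * (p i - neighbourMean C c p i) ^ 2
        + c i * (1 / (2 * A ^ 2 * c i)) := by gcongr
    _ = _ := by field_simp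

end Network

section GibbsStep

variable {d : ℕ} {C : Fin d → Fin d → ℝ} {c : Fin d → ℝ} {A : ℝ}

theorem integral_gibbsStep {f : (Fin d → ℝ) → ℝ} (hf : Continuous f) (p : Fin d → ℝ) :
    ∫ q, f q ∂gibbsStep d C c A p
      = (d : ℝ)⁻¹ * ∑ i, ∫ x, f (Function.update p i (neighbourMean C c p i + x))
          ∂truncGaussLaw (√(1 / (2 * A ^ 2 * c i))) (neighbourMean C c p i) := by
  have hupdate (i : Fin d) : Continuous fun x => Function.update p i (neighbourMean C c p i + x) :=
    continuous_const.update i (continuous_const_add _)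
  rw [gibbsStep, integral_smul_measure, integral_finsetSum_measure]
  · simp only [ENNReal.toReal_inv, ENNReal.toReal_natCast, smul_eq_mul]
    congr 1
    refine sum_congr rfl fun i _ => ?_
    exact integral_map (hupdate i).aemeasurable hf.aestronglyMeasurable
  · intro i _
    exact (integrable_map_measure hf.aestronglyMeasurable (hupdate i).aemeasurable).mpr
      (hf.comp (hupdate i)).integrable_truncGaussLaw

end GibbsStep

theorem gibbs_one_step_clustering_general
    (d : ℕ) (C : Fin d → Fin d → ℝ)
    (hsym : ∀ i j, C i j = C j i)
    (hnonneg : ∀ i j, 0 ≤ C i j)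
    (hdiag : ∀ i, C i i = 0)
    (c : Fin d → ℝ) (hc : ∀ i, c i = ∑ j, C i j)
    (hcpos : ∀ i, 0 < c i)
    (lam : ℝ)
    (hlam : ∀ q : Fin d → ℝ,
      lam * (∑ i, c i * q i * (q i - (∑ j, C i j * q j) / c i))
        ≤ ∑ i, c i * (q i - (∑ j, C i j * q j) / c i)
                * (q i - (∑ j, C i j * q j) / c i))
    (A : ℝ) (hA : 0 < A)
    (p : Fin d → ℝ) (hp : ∀ i, p i ∈ Set.Icc (0:ℝ) 1) :
    ∫ q, (∑ i, c i * q i * (q i - (∑ j, C i j * q j) / c i))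
        ∂(gibbsStep d C c A p)
      ≤ (1 - lam / d) * (∑ i, c i * p i * (p i - (∑ j, C i j * p j) / c i))
        + 5 / (2 * A ^ 2) := by
  rcases Nat.eq_zero_or_pos d with rfl | hd
  · simp only [gibbsStep, univ_eq_empty, sum_empty, smul_zero, integral_zero_measure, mul_zero,
      zero_add]
    positivity
  change ∫ q, dirichletEnergy C c q ∂gibbsStep d C c A p
    ≤ (1 - lam / d) * dirichletEnergy C c p + 5 / (2 * A ^ 2)
  have hgap : lam * dirichletEnergy C c p ≤ ∑ i, c i * (p i - neighbourMean C c p i) ^ 2 :=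
    (hlam p).trans_eq (sum_congr rfl fun i _ => by rw [neighbourMean]; ring)
  rw [integral_gibbsStep continuous_dirichletEnergy]
  calc (d : ℝ)⁻¹ * ∑ i, _
      ≤ (d : ℝ)⁻¹ * ∑ i, (dirichletEnergy C c p - c i * (p i - neighbourMean C c p i) ^ 2
          + 1 / (2 * A ^ 2)) := by
        gcongr with i
        exact integral_dirichletEnergy_update_truncGaussLaw_le hsym hnonneg hdiag hc hcpos
          hA.ne' hp i
    _ = dirichletEnergy C c p - (∑ i, c i * (p i - neighbourMean C c p i) ^ 2) / d
          + 1 / (2 * A ^ 2) := by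
        simp only [sum_add_distrib, sum_sub_distrib, sum_const, card_univ, Fintype.card_fin,
          nsmul_eq_mul]
        field_simp
    _ ≤ (1 - lam / d) * dirichletEnergy C c p + 5 / (2 * A ^ 2) := by
        have hgap' := div_le_div_of_nonneg_right hgap (Nat.cast_nonneg d)
        have hconst : 1 / (2 * A ^ 2) ≤ 5 / (2 * A ^ 2) := by gcongr; norm_num
        linear_combination hgap' + hconst

/-- one-step clustering contraction: for one Gibbs step `p'` from
`p ∈ [0,1]^d`, `E[⟨p', Δp'⟩] ≤ (1 - λ/d) ⟨p, Δp⟩ + 5/(2A²)`, where `λ` is the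
spectral gap of `Δ = I - D⁻¹C`, characterized by `⟨Δq, Δq⟩ ≥ λ ⟨q, Δq⟩`. -/
theorem gibbs_one_step_clustering
    (d : ℕ) (hd : 2 ≤ d) (C : Fin d → Fin d → ℝ)
    (hsym : ∀ i j, C i j = C j i)
    (hnonneg : ∀ i j, 0 ≤ C i j)
    (hdiag : ∀ i, C i i = 0)
    (hconn : ∀ i j : Fin d, Relation.ReflTransGen (fun a b => 0 < C a b) i j)
    (c : Fin d → ℝ) (hc : ∀ i, c i = ∑ j, C i j)
    (hcpos : ∀ i, 0 < c i)
    (htot : ∑ i, c i = 1)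
    (lam : ℝ) (hlampos : 0 < lam)
    (hlam : ∀ q : Fin d → ℝ,
      lam * (∑ i, c i * q i * (q i - (∑ j, C i j * q j) / c i))
        ≤ ∑ i, c i * (q i - (∑ j, C i j * q j) / c i)
                * (q i - (∑ j, C i j * q j) / c i))
    (A : ℝ) (hA : 0 < A)
    (p : Fin d → ℝ) (hp : ∀ i, p i ∈ Set.Icc (0:ℝ) 1) :
    ∫ q, (∑ i, c i * q i * (q i - (∑ j, C i j * q j) / c i))
        ∂(gibbsStep d C c A p)
      ≤ (1 - lam / d) * (∑ i, c i * p i * (p i - (∑ j, C i j * p j) / c i))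
        + 5 / (2 * A ^ 2) :=
  gibbs_one_step_clustering_general d C hsym hnonneg hdiag c hc hcpos lam hlam A hA p hp
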